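/- For all ξ, η ∈ ℝ⁴, the null-structure upper bound ‖ξ/⟨ξ⟩ − (ξ−η)/⟨ξ−η⟩‖ ≤ 8|η| / (⟨ξ⟩ + ⟨ξ−η⟩) holds. (This is the ξ-gradient of the Dirac phase p_Θ in the time-resonant case θ₀ = θ₁, exhibiting the factor |η| that removes the space-time resonance.) -/
import Mathlib


/-- Japanese bracket `⟨x⟩ = √(1 + |x|²)` on `ℝ⁴`. -/
noncomputable def jb (x : EuclideanSpace ℝ (Fin 4)) : ℝ := Real.sqrt (1 + ‖x‖ ^ 2)

lemma jb_pos (x : EuclideanSpace ℝ (Fin 4)) : 0 < jb x :=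
  Real.sqrt_pos.2 (by positivity)

lemma jb_sq (x : EuclideanSpace ℝ (Fin 4)) : jb x ^ 2 = 1 + ‖x‖ ^ 2 :=
  Real.sq_sqrt (by positivity)

lemma norm_le_jb (x : EuclideanSpace ℝ (Fin 4)) : ‖x‖ ≤ jb x := by
  nlinarith [jb_sq x, jb_pos x, norm_nonneg x]

lemma jb_lip (a b : EuclideanSpace ℝ (Fin 4)) : jb a ≤ jb b + ‖a - b‖ := by
  have h1 : ‖a‖ ≤ ‖b‖ + ‖a - b‖ := by
    have := norm_sub_norm_le a b
    linarith
  have h2 : ‖b‖ ≤ jb b := norm_le_jb b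
  have h3 : jb a ≤ Real.sqrt ((jb b + ‖a - b‖) ^ 2) := by
    apply Real.sqrt_le_sqrt
    nlinarith [norm_nonneg a, norm_nonneg b, norm_nonneg (a - b), jb_sq b, jb_pos b]
  rwa [Real.sqrt_sq (by nlinarith [jb_pos b, norm_nonneg (a - b)])] at h3

lemma abs_jb_sub_le (a b : EuclideanSpace ℝ (Fin 4)) : |jb b - jb a| ≤ ‖a - b‖ := by
  rw [abs_sub_le_iff]
  constructor
  · have := jb_lip b a
    rw [norm_sub_rev] at this
    linarith
  · have := jb_lip a b
    linarith

lemma key (a b : EuclideanSpace ℝ (Fin 4)) :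
    ‖(jb a)⁻¹ • a - (jb b)⁻¹ • b‖ ≤ 2 * ‖a - b‖ / jb a := by
  have hA := jb_pos a
  have hB := jb_pos b
  have hd : (jb a)⁻¹ • a - (jb b)⁻¹ • b
      = (jb a)⁻¹ • (a - b) + ((jb a)⁻¹ - (jb b)⁻¹) • b := by
    rw [smul_sub, sub_smul]; abel
  have e : (jb a)⁻¹ - (jb b)⁻¹ = (jb b - jb a) / (jb a * jb b) := by
    field_simp
  have h2 : |(jb a)⁻¹ - (jb b)⁻¹| * ‖b‖ ≤ ‖a - b‖ / jb a := by
    rw [e, abs_div, abs_of_pos (mul_pos hA hB), div_mul_eq_mul_div,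
      div_le_div_iff₀ (mul_pos hA hB) hA]
    have hab := abs_jb_sub_le a b
    have hbb := norm_le_jb b
    nlinarith [mul_le_mul hab hbb (norm_nonneg b) (norm_nonneg (a - b)), mul_pos hA hB]
  calc ‖(jb a)⁻¹ • a - (jb b)⁻¹ • b‖
      ≤ ‖(jb a)⁻¹ • (a - b)‖ + ‖((jb a)⁻¹ - (jb b)⁻¹) • b‖ := by
        rw [hd]; exact norm_add_le _ _
    _ = ‖a - b‖ / jb a + |(jb a)⁻¹ - (jb b)⁻¹| * ‖b‖ := by
        rw [norm_smul, norm_smul, Real.norm_eq_abs, Real.norm_eq_abs,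
          abs_of_pos (inv_pos.2 hA)]
        ring
    _ ≤ ‖a - b‖ / jb a + ‖a - b‖ / jb a := by linarith
    _ = 2 * ‖a - b‖ / jb a := by ring

/-- For all `ξ, η ∈ ℝ⁴`, the null-structure upper bound
`‖ξ/⟨ξ⟩ − (ξ−η)/⟨ξ−η⟩‖ ≤ 8|η| / (⟨ξ⟩ + ⟨ξ−η⟩)` holds. -/
theorem dirac_phase_null_structure (ξ η : EuclideanSpace ℝ (Fin 4)) :
    ‖(jb ξ)⁻¹ • ξ - (jb (ξ - η))⁻¹ • (ξ - η)‖ ≤ 8 * ‖η‖ / (jb ξ + jb (ξ - η)) := by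
  have hA := jb_pos ξ
  have hB := jb_pos (ξ - η)
  have hη : (0:ℝ) ≤ ‖η‖ := norm_nonneg η
  have h1 := key ξ (ξ - η)
  have h2 := key (ξ - η) ξ
  rw [sub_sub_cancel] at h1
  rw [show ξ - η - ξ = -η by abel, norm_neg, norm_sub_rev] at h2
  rcases le_total (jb ξ) (jb (ξ - η)) with h | h
  · refine h2.trans ?_
    rw [div_le_div_iff₀ hB (by linarith)]
    nlinarith
  · refine h1.trans ?_
    rw [div_le_div_iff₀ hA (by linarith)]
    nlinarith
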